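/- (Kozai's averaging rule for cosine functions in elliptic motion.) Let 0 ≤ e < 1, η = √(1−e²). For every natural number m and every α ∈ ℝ, (1/(2π)) · ∫₀^{2π} cos(m·f + α) · η³/(1 + e·cos f)² df = ( −e/(1+η) )^m · (1 + m·η) · cos α. -/

import Mathlib

/-!
Write `K_k(c) = ∫₀^{2π} cos (c f) / (1 + e cos f)^k`. Dividing
`e (cos ((c+1) f) + cos ((c-1) f)) = 2 cos (c f) ((1 + e cos f) - 1)` by `(1 + e cos f)^(k+1)`
gives the recurrence `e (K_{k+1}(c+1) + K_{k+1}(c-1)) = 2 (K_k(c) - K_{k+1}(c))`. As `K_0(m) = 0`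
for `m ≥ 1`, the moments `K_1(m)` satisfy a linear recurrence whose characteristic equation
`e β² + 2 β + e = 0` has the root `β = -e/(1+η)`, so `K_1(m) = 2π β^m / η`, and feeding this
into the case `k = 1` gives `K_2(m) = 2π β^m (1 + m η) / η³`. The initial values come from
the antiderivatives `E(f)/η` of `1/(1 + e cos f)`, with `E` the eccentric anomaly, and
`e sin f / (1 + e cos f)` of `1/(1 + e cos f) - η²/(1 + e cos f)²`. The sine part of
`cos (m f + α)` integrates to zero by the symmetry `f ↦ 2π - f`.
-/

open Real intervalIntegral
open MeasureTheory (volume)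

theorem integral_sin_nat_mul_mul_eq_zero {g : ℝ → ℝ} (hg : ∀ x, g (2 * π - x) = g x) (n : ℕ) :
    ∫ x in (0 : ℝ)..(2 * π), sin (n * x) * g x = 0 := by
  have h := integral_comp_sub_left (fun x => sin (n * x) * g x) (2 * π) (a := 0) (b := 2 * π)
  simp only [mul_sub, sin_nat_mul_two_pi_sub, hg, neg_mul, intervalIntegral.integral_neg,
    sub_self, sub_zero] at h
  linarith

theorem integral_cos_mul_add_mul {g : ℝ → ℝ} {a b : ℝ} (hg : IntervalIntegrable g volume a b)
    (c α : ℝ) :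
    ∫ x in a..b, cos (c * x + α) * g x
      = cos α * (∫ x in a..b, cos (c * x) * g x) - sin α * ∫ x in a..b, sin (c * x) * g x := by
  have hcos := (hg.continuousOn_mul (g := fun x => cos (c * x)) (by fun_prop)).const_mul (cos α)
  have hsin := (hg.continuousOn_mul (g := fun x => sin (c * x)) (by fun_prop)).const_mul (sin α)
  rw [← integral_const_mul, ← integral_const_mul, ← integral_sub hcos hsin]
  refine integral_congr fun x _ => ?_
  simp only [cos_add]
  ring

theorem integral_cos_nat_mul_two_pi {n : ℕ} (hn : n ≠ 0) :
    ∫ x in (0 : ℝ)..(2 * π), cos (n * x) = 0 := by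
  rw [integral_comp_mul_left _ (Nat.cast_ne_zero.mpr hn), integral_cos, sin_periodic.nat_mul_eq]
  simp

noncomputable def cosMoment (e : ℝ) (k : ℕ) (c : ℝ) : ℝ :=
  ∫ x in (0 : ℝ)..(2 * π), cos (c * x) / (1 + e * cos x) ^ k

/-- The eccentric anomaly as a function of the true anomaly `f`: the usual relation
`tan (E/2) = √((1-e)/(1+e)) tan (f/2)`, rewritten so as to be smooth in `f`. -/
noncomputable def eccentricAnomaly (e f : ℝ) : ℝ :=
  f - 2 * arctan (e * sin f / (1 + √(1 - e ^ 2) + e * cos f))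

section

variable {e : ℝ}

theorem one_add_mul_cos_pos (he : |e| < 1) (x : ℝ) : 0 < 1 + e * cos x := by
  have : |e * cos x| < 1 := by
    rw [abs_mul]
    nlinarith [abs_cos_le_one x, abs_nonneg e, abs_nonneg (cos x)]
  linarith [neg_abs_le (e * cos x)]

theorem sq_sqrt_one_sub_sq (he : |e| < 1) : √(1 - e ^ 2) ^ 2 = 1 - e ^ 2 :=
  sq_sqrt (sub_nonneg.2 ((sq_le_one_iff_abs_le_one e).2 he.le))

theorem intervalIntegrable_div_one_add_mul_cos_pow {g : ℝ → ℝ} (hg : Continuous g)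
    (he : |e| < 1) (k : ℕ) (a b : ℝ) :
    IntervalIntegrable (fun x => g x / (1 + e * cos x) ^ k) volume a b :=
  (hg.div (by fun_prop) fun x => pow_ne_zero k (one_add_mul_cos_pos he x).ne').intervalIntegrable a b

theorem cosMoment_neg (k : ℕ) (c : ℝ) : cosMoment e k (-c) = cosMoment e k c := by
  simp only [cosMoment, neg_mul, cos_neg]

theorem cosMoment_zero_zero : cosMoment e 0 0 = 2 * π := by
  simp [cosMoment]

theorem cosMoment_zero_nat {n : ℕ} (hn : n ≠ 0) : cosMoment e 0 n = 0 := by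
  simp [cosMoment, integral_cos_nat_mul_two_pi hn]

theorem cosMoment_recurrence (he : |e| < 1) (k : ℕ) (c : ℝ) :
    e * (cosMoment e (k + 1) (c + 1) + cosMoment e (k + 1) (c - 1))
      = 2 * (cosMoment e k c - cosMoment e (k + 1) c) := by
  have hint (j : ℕ) (d : ℝ) :
      IntervalIntegrable (fun x => cos (d * x) / (1 + e * cos x) ^ j) volume 0 (2 * π) :=
    intervalIntegrable_div_one_add_mul_cos_pow (by fun_prop) he j _ _
  rw [cosMoment, cosMoment, cosMoment, cosMoment, ← integral_add (hint _ _) (hint _ _),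
    ← integral_sub (hint _ _) (hint _ _), ← integral_const_mul, ← integral_const_mul]
  refine integral_congr fun x _ => ?_
  have hD := (one_add_mul_cos_pos he x).ne'
  simp only [add_mul, sub_mul, one_mul, cos_add, cos_sub, pow_succ]
  field_simp
  ring

theorem hasDerivAt_eccentricAnomaly (he : |e| < 1) (f : ℝ) :
    HasDerivAt (eccentricAnomaly e) (√(1 - e ^ 2) / (1 + e * cos f)) f := by
  have hη := sq_sqrt_one_sub_sq he
  set η := √(1 - e ^ 2)
  have hD := one_add_mul_cos_pos he f
  have hη0 : 0 ≤ η := sqrt_nonneg _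
  have hη1 : 0 < 1 + η := by linarith
  have hN : 0 < 1 + η + e * cos f := by linarith
  have hu := ((hasDerivAt_sin f).const_mul e).div
    (((hasDerivAt_cos f).const_mul e).const_add (1 + η)) hN.ne'
  refine ((hasDerivAt_id f).sub (hu.arctan.const_mul 2)).congr_deriv ?_
  have hpyth := sin_sq_add_cos_sq f
  have hsq : 1 + (e * sin f / (1 + η + e * cos f)) ^ 2
      = 2 * (1 + η) * (1 + e * cos f) / (1 + η + e * cos f) ^ 2 := by
    field_simp
    linear_combination e ^ 2 * hpyth + hη
  simp only [Pi.div_apply]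
  rw [hsq]
  field_simp
  linear_combination -e ^ 2 * hpyth - hη

theorem sqrt_mul_cosMoment_one_zero (he : |e| < 1) :
    √(1 - e ^ 2) * cosMoment e 1 0 = 2 * π := by
  have h := integral_eq_sub_of_hasDerivAt (fun x _ => hasDerivAt_eccentricAnomaly he x)
    (by simpa only [pow_one] using
      intervalIntegrable_div_one_add_mul_cos_pow continuous_const he 1 0 (2 * π))
  simp only [eccentricAnomaly, sin_two_pi, cos_two_pi, sin_zero, mul_zero, zero_div, arctan_zero,
    sub_zero] at h
  rw [cosMoment, ← integral_const_mul, ← h]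
  congr 1 with x
  simp only [zero_mul, cos_zero, pow_one, mul_one_div]

theorem one_sub_sq_mul_cosMoment_two_zero (he : |e| < 1) :
    (1 - e ^ 2) * cosMoment e 2 0 = cosMoment e 1 0 := by
  have hderiv (x : ℝ) : HasDerivAt (fun x => e * sin x / (1 + e * cos x))
      (1 / (1 + e * cos x) - (1 - e ^ 2) * (1 / (1 + e * cos x) ^ 2)) x := by
    have hD := one_add_mul_cos_pos he x
    refine (((hasDerivAt_sin x).const_mul e).div
      (((hasDerivAt_cos x).const_mul e).const_add 1) hD.ne').congr_deriv ?_
    field_simp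
    linear_combination e ^ 2 * sin_sq_add_cos_sq x
  have h1 : IntervalIntegrable (fun x => 1 / (1 + e * cos x)) volume 0 (2 * π) := by
    simpa only [pow_one] using
      intervalIntegrable_div_one_add_mul_cos_pow continuous_const he 1 0 (2 * π)
  have h2 := (intervalIntegrable_div_one_add_mul_cos_pow (g := fun _ => 1) continuous_const he 2
    0 (2 * π)).const_mul (1 - e ^ 2)
  have h := integral_eq_sub_of_hasDerivAt (fun x _ => hderiv x) (h1.sub h2)
  rw [integral_sub h1 h2, integral_const_mul] at h
  simp only [sin_two_pi, sin_zero, mul_zero, zero_div, sub_zero] at h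
  simp only [cosMoment, zero_mul, cos_zero, pow_one]
  linarith

theorem cosMoment_closed_form (he : |e| < 1) (m : ℕ) :
    √(1 - e ^ 2) * cosMoment e 1 m = 2 * π * (-e / (1 + √(1 - e ^ 2))) ^ m ∧
      √(1 - e ^ 2) ^ 3 * cosMoment e 2 m
        = 2 * π * (-e / (1 + √(1 - e ^ 2))) ^ m * (1 + m * √(1 - e ^ 2)) := by
  rcases eq_or_ne e 0 with rfl | he0
  · rcases eq_or_ne m 0 with rfl | hm
    · simp [cosMoment]
    · simp [cosMoment, integral_cos_nat_mul_two_pi hm, hm]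
  have hJ0 := sqrt_mul_cosMoment_one_zero he
  have hJI0 := one_sub_sq_mul_cosMoment_two_zero he
  have hη2 := sq_sqrt_one_sub_sq he
  set η := √(1 - e ^ 2)
  have hη1 : 1 + η ≠ 0 := by positivity
  have hβ : e * (-e / (1 + η)) = η - 1 := by
    rw [mul_div_assoc', div_eq_iff hη1]
    linear_combination -hη2
  set β := -e / (1 + η)
  have hβ2 : e * β ^ 2 + 2 * β + e = 0 := by
    linear_combination β * hβ + (div_mul_cancel₀ (-e) hη1 : β * (1 + η) = -e)
  have hI0 : η ^ 3 * cosMoment e 2 0 = 2 * π := by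
    linear_combination η * hJI0 + hJ0 + η * cosMoment e 2 0 * hη2
  induction m using Nat.twoStepInduction with
  | zero => simpa using ⟨hJ0, hI0⟩
  | one =>
    have hJ := cosMoment_recurrence he 0 0
    have hI := cosMoment_recurrence he 1 0
    simp only [zero_add, zero_sub, cosMoment_neg, cosMoment_zero_zero, one_add_one_eq_two] at hJ hI
    simp only [Nat.cast_one, pow_one]
    constructor
    · refine mul_left_cancel₀ he0 ?_
      linear_combination η / 2 * hJ - hJ0 - 2 * π * hβ
    · refine mul_left_cancel₀ he0 ?_
      linear_combination η ^ 3 / 2 * hI + η ^ 2 * hJ0 - hI0 - 2 * π * (1 + η) * hβ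
  | more n ih0 ih1 =>
    have hJ := cosMoment_recurrence he 0 ((n + 1 : ℕ) : ℝ)
    have hI := cosMoment_recurrence he 1 ((n + 1 : ℕ) : ℝ)
    rw [cosMoment_zero_nat n.succ_ne_zero] at hJ
    push_cast at hJ hI ih1 ⊢
    rw [add_assoc, one_add_one_eq_two, add_sub_cancel_right] at hJ hI
    constructor
    · refine mul_left_cancel₀ he0 ?_
      linear_combination η * hJ - e * ih0.1 - 2 * ih1.1 - 2 * π * β ^ n * hβ2
    · refine mul_left_cancel₀ he0 ?_
      linear_combination η ^ 3 * hI - e * ih0.2 + 2 * η ^ 2 * ih1.1 - 2 * ih1.2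
        - 2 * π * ((1 + n * η) * β ^ n * hβ2 + 2 * η * β ^ (n + 1) * hβ)

end

/-- (Kozai's averaging rule for cosine functions in elliptic motion.)
For `0 ≤ e < 1`, `η = √(1−e²)`, every natural number `m` and every `α ∈ ℝ`,
`(1/(2π)) ∫₀^{2π} cos(m f + α) · η³/(1+e cos f)² df = (−e/(1+η))^m (1+m η) cos α`. -/
theorem kozai_average_cosine
    (e η : ℝ) (he0 : 0 ≤ e) (he1 : e < 1)
    (hη : η = Real.sqrt (1 - e ^ 2)) :
    ∀ (m : ℕ) (α : ℝ),
      (1 / (2 * Real.pi)) *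
        ∫ f in (0 : ℝ)..(2 * Real.pi),
          Real.cos ((m : ℝ) * f + α) * (η ^ 3 / (1 + e * Real.cos f) ^ 2)
      = (-e / (1 + η)) ^ m * (1 + (m : ℝ) * η) * Real.cos α := by
  intro m α
  have he : |e| < 1 := abs_lt.mpr ⟨by linarith, he1⟩
  have hsin := integral_sin_nat_mul_mul_eq_zero
    (g := fun f => η ^ 3 / (1 + e * cos f) ^ 2) (fun x => by rw [cos_two_pi_sub]) m
  have hcos : ∫ f in (0 : ℝ)..(2 * π), cos (m * f) * (η ^ 3 / (1 + e * cos f) ^ 2)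
      = η ^ 3 * cosMoment e 2 m := by
    rw [cosMoment, ← integral_const_mul]
    congr 1 with f
    ring
  have hmoment := (cosMoment_closed_form he m).2
  rw [← hη] at hmoment
  rw [integral_cos_mul_add_mul
      (intervalIntegrable_div_one_add_mul_cos_pow continuous_const he 2 _ _), hsin, hcos]
  field_simp
  linear_combination cos α * hmoment
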